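/- arXiv:math/9908145 — 5 statements merged into one kernel-verified Lean document; each statement's English description precedes it below -/
import Mathlib

section
/- Let n be a nonnegative integer and let a, b, c be real numbers with \((a+1)_n (c)_n \ne 0\). Then the n-th partial sum of the Gauss hypergeometric series at 1 satisfies \(\sum_{k=0}^n \frac{(a)_k (b)_k}{(c)_k\, k!} = \frac{(a+1)_n}{n!}\; {}_3F_2\!\left(\begin{matrix}-n, a, c-b\\ a+1, c\end{matrix}; 1\right)\), where the \({}_3F_2\) is the terminating hypergeometric sum \(\sum_{m=0}^n \frac{(-n)_m (a)_m (c-b)_m}{(a+1)_m (c)_m\, m!}\). -/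
open Finset

/-- Rising factorial (Pochhammer symbol) `(x)_k = x(x+1)⋯(x+k-1)`. -/
noncomputable def poch (x : ℝ) (k : ℕ) : ℝ := (ascPochhammer ℝ k).eval x

/-- Generalized binomial coefficient `C(y, m) = (y-m+1)_m / m!` for real `y`. -/
noncomputable def gbinom (y : ℝ) (m : ℕ) : ℝ := poch (y - m + 1) m / m.factorial

/-- Generalized binomial coefficient with integer lower index, zero for negative index. -/
noncomputable def gbinomZ (y : ℝ) (m : ℤ) : ℝ := if 0 ≤ m then gbinom y m.toNat else 0

/-- Generalized Laguerre polynomial `L_n^{(a)}(x)`, defined for all real `a`. -/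
noncomputable def Lag (n : ℕ) (a : ℝ) (x : ℝ) : ℝ :=
  ∑ k ∈ range (n + 1),
    (-1 : ℝ) ^ k * poch (a + k + 1) (n - k) / (n - k).factorial * x ^ k / k.factorial

/-!
Chu–Vandermonde gives `(b)_k / (c)_k = ∑_m (-1)^m C(k,m) (c-b)_m / (c)_m`. Substituting this
into the partial sum and exchanging the order of summation leaves, for each `m`, the inner sum
`∑_{k=m}^n (a)_k / (k-m)! = (a)_m ∑_{j ≤ n-m} (a+m)_j / j!`, which collapses to
`(a)_m (a+m+1)_{n-m} / (n-m)!`. Since `(-n)_m / n! = (-1)^m / (n-m)!` and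
`(a+1)_n / (a+1)_m = (a+m+1)_{n-m}`, this is the `m`-th term of the right-hand side.
-/

@[simp]
lemma poch_zero (x : ℝ) : poch x 0 = 1 := by simp [poch]

lemma poch_succ (x : ℝ) (k : ℕ) : poch x (k + 1) = poch x k * (x + k) :=
  ascPochhammer_succ_eval k x

lemma poch_succ_left (x : ℝ) (k : ℕ) : poch x (k + 1) = x * poch (x + 1) k := by
  simp [poch, ascPochhammer_succ_left, Polynomial.eval_comp]

lemma poch_add (x : ℝ) (i j : ℕ) : poch x (i + j) = poch x i * poch (x + i) j := by
  simpa [poch, Polynomial.eval_comp] using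
    (congrArg (Polynomial.eval x) (ascPochhammer_mul ℝ i j)).symm

lemma poch_of_le {x : ℝ} {k n : ℕ} (hk : k ≤ n) :
    poch x n = poch x k * poch (x + k) (n - k) := by
  rw [← poch_add, Nat.add_sub_cancel' hk]

lemma poch_ne_zero_of_le {x : ℝ} {k n : ℕ} (hx : poch x n ≠ 0) (hk : k ≤ n) :
    poch x k ≠ 0 :=
  left_ne_zero_of_mul (poch_of_le hk ▸ hx)

lemma poch_neg_natCast {m n : ℕ} (hm : m ≤ n) :
    poch (-n) m = (-1) ^ m * n.factorial / (n - m).factorial := by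
  rw [poch, ascPochhammer_eval_neg_eq_descPochhammer, descPochhammer_eval_eq_descFactorial,
    ← Nat.factorial_mul_descFactorial hm]
  push_cast
  field_simp

lemma sum_range_poch_div_factorial (x : ℝ) (p : ℕ) :
    ∑ j ∈ range (p + 1), poch x j / j.factorial = poch (x + 1) p / p.factorial := by
  induction p with
  | zero => simp
  | succ p ih =>
    rw [sum_range_succ, ih, poch_succ_left, poch_succ, Nat.factorial_succ]
    push_cast
    field_simp
    ring

/-- Chu–Vandermonde, with denominators cleared. -/
lemma sum_antidiagonal_choose_mul_poch (k : ℕ) (c d : ℝ) :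
    ∑ ij ∈ antidiagonal k,
        (k.choose ij.1 : ℝ) * ((-1) ^ ij.1 * poch d ij.1 * poch (c + ij.1) ij.2)
      = poch (c - d) k := by
  induction k generalizing c d with
  | zero => simp
  | succ k ih =>
    rw [sum_antidiagonal_choose_succ_mul (fun i j => (-1) ^ i * poch d i * poch (c + i) j)]
    have hfirst : ∀ ij ∈ antidiagonal k, (k.choose ij.1 : ℝ) *
        ((-1) ^ ij.1 * poch d ij.1 * poch (c + ij.1) (ij.2 + 1))
          = (c + k) *
              ((k.choose ij.1 : ℝ) * ((-1) ^ ij.1 * poch d ij.1 * poch (c + ij.1) ij.2)) := by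
      rintro ⟨i, j⟩ hij
      rw [HasAntidiagonal.mem_antidiagonal] at hij
      subst hij
      rw [poch_succ]
      push_cast
      ring
    have hsecond : ∀ ij ∈ antidiagonal k, (k.choose ij.2 : ℝ) *
        ((-1) ^ (ij.1 + 1) * poch d (ij.1 + 1) * poch (c + ↑(ij.1 + 1)) ij.2)
          = -d * ((k.choose ij.1 : ℝ) *
              ((-1) ^ ij.1 * poch (d + 1) ij.1 * poch (c + 1 + ij.1) ij.2)) := by
      rintro ⟨i, j⟩ hij
      rw [HasAntidiagonal.mem_antidiagonal] at hij
      rw [← Nat.choose_symm_of_eq_add hij.symm, poch_succ_left,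
        show c + ((i + 1 : ℕ) : ℝ) = c + 1 + i by push_cast; ring]
      ring
    rw [sum_congr rfl hfirst, sum_congr rfl hsecond, ← mul_sum, ← mul_sum, ih, ih,
      show c + 1 - (d + 1) = c - d by ring, poch_succ]
    ring

lemma poch_div_poch_eq_sum {c : ℝ} {k : ℕ} (b : ℝ) (hc : poch c k ≠ 0) :
    poch b k / poch c k
      = ∑ m ∈ range (k + 1), (-1) ^ m * k.choose m * poch (c - b) m / poch c m := by
  have hvdm := sum_antidiagonal_choose_mul_poch k c (c - b)
  rw [sub_sub_cancel, Nat.sum_antidiagonal_eq_sum_range_succ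
    (fun i j => (k.choose i : ℝ) * ((-1) ^ i * poch (c - b) i * poch (c + i) j))] at hvdm
  rw [← hvdm, sum_div]
  refine sum_congr rfl fun m hm => ?_
  have hmk : m ≤ k := mem_range_succ_iff.mp hm
  rw [poch_of_le hmk] at hc ⊢
  field_simp [right_ne_zero_of_mul hc]

lemma sum_Ico_poch_div_factorial (a : ℝ) {m n : ℕ} (hm : m ≤ n) :
    ∑ k ∈ Ico m (n + 1), poch a k / (k - m).factorial
      = poch a m * (poch (a + m + 1) (n - m) / (n - m).factorial) := by
  rw [sum_Ico_eq_sum_range, Nat.succ_sub hm, ← sum_range_poch_div_factorial, mul_sum]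
  simp only [poch_add, Nat.add_sub_cancel_left, mul_div_assoc]

theorem partial_sum_gauss_hypergeometric (n : ℕ) (a b c : ℝ)
    (h : poch (a + 1) n * poch c n ≠ 0) :
    ∑ k ∈ range (n + 1), poch a k * poch b k / (poch c k * k.factorial)
      = poch (a + 1) n / n.factorial *
        ∑ m ∈ range (n + 1),
          poch (-(n : ℝ)) m * poch a m * poch (c - b) m /
            (poch (a + 1) m * poch c m * m.factorial) := by
  have hc {k : ℕ} (hk : k ≤ n) : poch c k ≠ 0 :=
    poch_ne_zero_of_le (right_ne_zero_of_mul h) hk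
  have ha {m : ℕ} (hm : m ≤ n) : poch (a + 1) m ≠ 0 :=
    poch_ne_zero_of_le (left_ne_zero_of_mul h) hm
  calc ∑ k ∈ range (n + 1), poch a k * poch b k / (poch c k * k.factorial)
      = ∑ k ∈ range (n + 1), ∑ m ∈ range (k + 1),
          (-1) ^ m * poch (c - b) m / (poch c m * m.factorial) *
            (poch a k / (k - m).factorial) := by
        refine sum_congr rfl fun k hk => ?_
        have hkn : k ≤ n := mem_range_succ_iff.mp hk
        rw [mul_comm (poch c k), mul_div_mul_comm, poch_div_poch_eq_sum b (hc hkn), mul_sum]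
        refine sum_congr rfl fun m hm => ?_
        rw [Nat.cast_choose ℝ (mem_range_succ_iff.mp hm)]
        field_simp
    _ = ∑ m ∈ range (n + 1), (-1) ^ m * poch (c - b) m / (poch c m * m.factorial) *
          ∑ k ∈ Ico m (n + 1), poch a k / (k - m).factorial := by
        simp only [range_eq_Ico, mul_sum]
        exact (sum_Ico_Ico_comm 0 (n + 1) _).symm
    _ = _ := by
        rw [mul_sum]
        refine sum_congr rfl fun m hm => ?_
        have hmn : m ≤ n := mem_range_succ_iff.mp hm
        rw [sum_Ico_poch_div_factorial a hmn, poch_neg_natCast hmn, poch_of_le (x := a + 1) hmn,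
          add_right_comm a 1]
        field_simp [ha hmn, hc hmn]
end

section
/- For any real \(\alpha\), any real p, and every nonnegative integer n, one has \(L_n^{(\alpha-p)}(x) = \sum_{k=0}^n (-1)^k \binom{p}{k} L_{n-k}^{(\alpha)}(x)\) as an identity of polynomials in x. -/
/-!
With `multichoose b m = (b)_m / m!`, the coefficient of `(-1)^j x^j / j!` in `L_n^{(a)}(x)` is
`multichoose (a + j + 1) (n - j)`. Comparing coefficients of `x^j`, the identity becomes the
ascending Chu–Vandermonde identity
`multichoose (b - p) m = ∑ k, multichoose (-p) k * multichoose b (m - k)` with `b = a + j + 1`,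
combined with upper negation `multichoose (-p) k = (-1)^k * choose p k`. The ascending
Vandermonde identity is itself the usual one, `Ring.add_choose_eq`, applied to `-r` and `-s`.
-/

open Finset

namespace Ring

variable {R : Type*} [CommRing R] [BinomialRing R]

theorem multichoose_eq_neg_one_pow_mul_choose_neg (r : R) (n : ℕ) :
    multichoose r n = (-1) ^ n * choose (-r) n := by
  rw [choose_neg', Units.smul_def, Int.coe_negOnePow_natCast, zsmul_eq_mul, ← mul_assoc]
  push_cast
  rw [← pow_add, ← two_mul, pow_mul, neg_one_sq, one_pow, one_mul]

theorem multichoose_add (r s : R) (k : ℕ) :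
    multichoose (r + s) k = ∑ ij ∈ antidiagonal k, multichoose r ij.1 * multichoose s ij.2 := by
  rw [multichoose_eq_neg_one_pow_mul_choose_neg, neg_add, add_choose_eq k (Commute.all _ _),
    mul_sum]
  refine sum_congr rfl fun ij hij => ?_
  rw [multichoose_eq_neg_one_pow_mul_choose_neg r, multichoose_eq_neg_one_pow_mul_choose_neg s,
    ← mem_antidiagonal.mp hij, pow_add]
  ring

end Ring

theorem poch_div_factorial (x : ℝ) (k : ℕ) : poch x k / k.factorial = Ring.multichoose x k := by
  rw [div_eq_iff (by positivity), mul_comm, ← nsmul_eq_mul,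
    Ring.factorial_nsmul_multichoose_eq_ascPochhammer, Polynomial.ascPochhammer_smeval_eq_eval,
    poch]

theorem gbinom_eq_choose (y : ℝ) (m : ℕ) : gbinom y m = Ring.choose y m := by
  rw [gbinom, poch_div_factorial, Ring.choose]

theorem multichoose_neg_eq_neg_one_pow_mul_gbinom (p : ℝ) (k : ℕ) :
    Ring.multichoose (-p) k = (-1) ^ k * gbinom p k := by
  rw [Ring.multichoose_eq_neg_one_pow_mul_choose_neg, neg_neg, gbinom_eq_choose]

theorem multichoose_sub_eq_sum_gbinom (b p : ℝ) (m : ℕ) :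
    Ring.multichoose (b - p) m =
      ∑ k ∈ range (m + 1), (-1) ^ k * gbinom p k * Ring.multichoose b (m - k) := by
  rw [sub_eq_neg_add, Ring.multichoose_add, Nat.sum_antidiagonal_eq_sum_range_succ
    (fun i j => Ring.multichoose (-p) i * Ring.multichoose b j)]
  simp only [multichoose_neg_eq_neg_one_pow_mul_gbinom]

theorem Lag_eq_sum_multichoose (n : ℕ) (a x : ℝ) :
    Lag n a x = ∑ j ∈ range (n + 1),
      (-1) ^ j * x ^ j / j.factorial * Ring.multichoose (a + j + 1) (n - j) := by
  refine sum_congr rfl fun j _ => ?_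
  rw [← poch_div_factorial]
  ring

theorem laguerre_parameter_shift (a p : ℝ) (n : ℕ) (x : ℝ) :
    Lag n (a - p) x = ∑ k ∈ range (n + 1), (-1 : ℝ) ^ k * gbinom p k * Lag (n - k) a x := by
  simp only [Lag_eq_sum_multichoose, mul_sum]
  rw [sum_comm' (t' := range (n + 1)) (s' := fun j => range (n - j + 1))
    (by intro k j; simp only [mem_range]; omega)]
  refine sum_congr rfl fun j _ => ?_
  rw [show a - p + j + 1 = a + j + 1 - p by ring, multichoose_sub_eq_sum_gbinom, mul_sum]
  refine sum_congr rfl fun k _ => ?_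
  rw [show n - k - j = n - j - k by omega]
  ring
end

section
/- Laguerre inversion formula: For any real \(\alpha\) and nonnegative integers \(j \le i\), one has \(\sum_{k=j}^i L_{i-k}^{(-\alpha-i-1)}(-x)\, L_{k-j}^{(\alpha+j)}(x) = \delta_{ij}\) as an identity of polynomials in x, where \(\delta_{ij}\) is the Kronecker delta. -/
open Finset

/-!
Put `n = i - j`, `α = a + j` and `β = -a - i - 1`, so that `α + β + 1 = -n`. The sum is then an
instance of the addition formula `L_n^{(α+β+1)}(x + y) = ∑_{p+q=n} L_p^{(α)}(x) L_q^{(β)}(y)` at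
`y = -x`, hence equals `L_n^{(-n)}(0) = C(0, n) = δ_{n0}`. The addition formula follows from the
expansion `L_n^{(a)}(x) = ∑_{k+u=n} ((a+k+1) multichoose u) (-x)^k / k!`: regroup the fourfold
sum by `k + l` and `u + v`, then apply Chu–Vandermonde to the multichoose coefficients and the
binomial theorem to the powers.
-/

theorem Ring.multichoose_add_s7 {R : Type*} [CommRing R] [BinomialRing R] (r s : R) (n : ℕ) :
    Ring.multichoose (r + s) n =
      ∑ p ∈ antidiagonal n, Ring.multichoose r p.1 * Ring.multichoose s p.2 := by
  have h (t : R) (k : ℕ) : Ring.multichoose t k = Int.negOnePow k • Ring.choose (-t) k := by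
    rw [Ring.choose_neg', smul_smul, ← Int.negOnePow_add, Int.negOnePow_even _ (by simp), one_smul]
  rw [h, neg_add, Ring.add_choose_eq n (Commute.all _ _), smul_sum]
  refine sum_congr rfl fun p hp => ?_
  rw [h, h, ← mem_antidiagonal.mp hp, Nat.cast_add, Int.negOnePow_add, smul_mul_smul_comm,
    mul_smul]

theorem sum_antidiagonal_pow_div_factorial {K : Type*} [Field K] [CharZero K] (x y : K) (n : ℕ) :
    ∑ p ∈ antidiagonal n, x ^ p.1 / p.1.factorial * (y ^ p.2 / p.2.factorial) =
      (x + y) ^ n / n.factorial := by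
  have h := congrArg (PowerSeries.coeff n) (PowerSeries.exp_mul_exp_eq_exp_add (A := K) x y)
  simpa [PowerSeries.coeff_mul, div_eq_mul_inv, mul_comm, mul_left_comm, mul_assoc] using h

theorem sum_antidiagonal_mul_sum_antidiagonal {M : Type*} [CommSemiring M] (g h : ℕ → ℕ → M)
    (n : ℕ) :
    ∑ p ∈ antidiagonal n, (∑ q ∈ antidiagonal p.1, g q.1 q.2) * ∑ r ∈ antidiagonal p.2, h r.1 r.2 =
      ∑ p ∈ antidiagonal n, ∑ q ∈ antidiagonal p.1, ∑ r ∈ antidiagonal p.2,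
        g q.1 r.1 * h q.2 r.2 := by
  simp only [sum_mul_sum, ← sum_product', sum_sigma']
  -- transposing the index array `((k, u), (l, v))` is an involution between the two index sets
  refine sum_bij'
    (fun a _ => ⟨(a.2.1.1 + a.2.2.1, a.2.1.2 + a.2.2.2), (a.2.1.1, a.2.2.1), (a.2.1.2, a.2.2.2)⟩)
    (fun a _ => ⟨(a.2.1.1 + a.2.2.1, a.2.1.2 + a.2.2.2), (a.2.1.1, a.2.2.1), (a.2.1.2, a.2.2.2)⟩)
    ?_ ?_ ?_ ?_ ?_
  all_goals
    rintro ⟨⟨m, m'⟩, ⟨k, l⟩, ⟨u, v⟩⟩ hmem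
    simp only [mem_sigma, mem_product, HasAntidiagonal.mem_antidiagonal] at hmem
    obtain ⟨hn, rfl, rfl⟩ := hmem
    simp only [mem_sigma, mem_product, HasAntidiagonal.mem_antidiagonal, and_true]
  all_goals omega

theorem poch_div_factorial_s7 (r : ℝ) (n : ℕ) : poch r n / n.factorial = Ring.multichoose r n := by
  rw [poch, ← Polynomial.ascPochhammer_smeval_eq_eval,
    ← Ring.factorial_nsmul_multichoose_eq_ascPochhammer, nsmul_eq_mul,
    mul_div_cancel_left₀ _ (by positivity)]

theorem Lag_eq_sum_antidiagonal (n : ℕ) (a x : ℝ) :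
    Lag n a x = ∑ p ∈ antidiagonal n,
      Ring.multichoose (a + p.1 + 1) p.2 * ((-x) ^ p.1 / p.1.factorial) := by
  rw [Lag, Nat.sum_antidiagonal_eq_sum_range_succ_mk]
  refine sum_congr rfl fun k _ => ?_
  rw [← poch_div_factorial_s7, neg_pow]
  ring

theorem Lag_eval_zero (n : ℕ) (a : ℝ) : Lag n a 0 = Ring.choose (a + n) n := by
  rw [Lag, sum_range_succ', sum_eq_zero fun k _ => by simp, zero_add]
  simp [poch_div_factorial_s7, Ring.multichoose_eq, add_sub_right_comm]

theorem Lag_add (n : ℕ) (α β x y : ℝ) :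
    Lag n (α + β + 1) (x + y) = ∑ p ∈ antidiagonal n, Lag p.1 α x * Lag p.2 β y := by
  simp only [Lag_eq_sum_antidiagonal]
  rw [sum_antidiagonal_mul_sum_antidiagonal
    (fun k u => Ring.multichoose (α + k + 1) u * ((-x) ^ k / k.factorial))
    (fun l v => Ring.multichoose (β + l + 1) v * ((-y) ^ l / l.factorial))]
  refine sum_congr rfl fun p _ => ?_
  calc Ring.multichoose (α + β + 1 + p.1 + 1) p.2 * ((-(x + y)) ^ p.1 / p.1.factorial)
      = ∑ q ∈ antidiagonal p.1, Ring.multichoose (α + β + 1 + p.1 + 1) p.2 *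
          ((-x) ^ q.1 / q.1.factorial * ((-y) ^ q.2 / q.2.factorial)) := by
        rw [← mul_sum, sum_antidiagonal_pow_div_factorial, neg_add]
    _ = ∑ q ∈ antidiagonal p.1, ∑ r ∈ antidiagonal p.2,
        Ring.multichoose (α + q.1 + 1) r.1 * ((-x) ^ q.1 / q.1.factorial) *
          (Ring.multichoose (β + q.2 + 1) r.2 * ((-y) ^ q.2 / q.2.factorial)) := by
        refine sum_congr rfl fun q hq => ?_
        have hsplit : α + β + 1 + (p.1 : ℝ) + 1 = (α + q.1 + 1) + (β + q.2 + 1) := by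
          rw [← mem_antidiagonal.mp hq, Nat.cast_add]
          ring
        rw [hsplit, Ring.multichoose_add_s7, sum_mul]
        exact sum_congr rfl fun r _ => by ring

theorem laguerre_inversion (a : ℝ) (i j : ℕ) (hj : j ≤ i) (x : ℝ) :
    ∑ k ∈ Icc j i, Lag (i - k) (-a - i - 1) (-x) * Lag (k - j) (a + j) x
      = if i = j then 1 else 0 := by
  obtain ⟨n, rfl⟩ := Nat.exists_eq_add_of_le hj
  have hsum : ∑ k ∈ Icc j (j + n), Lag (j + n - k) (-a - ↑(j + n) - 1) (-x) * Lag (k - j) (a + j) x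
      = ∑ p ∈ antidiagonal n, Lag p.1 (a + j) x * Lag p.2 (-(a + j) - n - 1) (-x) := by
    rw [Nat.sum_antidiagonal_eq_sum_range_succ (fun k l => Lag k (a + j) x * Lag l _ (-x)),
      ← Ico_add_one_right_eq_Icc, sum_Ico_eq_sum_range, show j + n + 1 - j = n + 1 by omega]
    refine sum_congr rfl fun m _ => ?_
    rw [Nat.add_sub_add_left, Nat.add_sub_cancel_left, mul_comm, Nat.cast_add]
    ring_nf
  have hparam : a + j + (-(a + j) - n - 1) + 1 = -n := by ring
  rw [hsum, ← Lag_add, hparam, add_neg_cancel, Lag_eval_zero, neg_add_cancel, Ring.choose_zero_ite]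
  simp
end

section
/- Define \(K(p,q,r;s;\alpha,x) := \sum_{i=0}^{\infty}\sum_{j=0}^i \frac{(-1)^{i+j}}{\Gamma(i-s)}\binom{\alpha+p}{j}\binom{\alpha+q}{i-j}(\alpha+r)_{i-j}\,x^j\). For \(\alpha\in\{0,1,2,\ldots\}\) (so the double sum is finite) and integers r, s with \(r \ge 1\) and \(r+s \ge 0\), taking \(p=q=r+s\): \(K(r+s,\,r+s,\,r;\,s;\,\alpha,x) = (-1)^{\alpha+r+s}\,\frac{(\alpha+1)_{r+s}}{(\alpha+1)_{r-1}}\), independently of x. -/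
open Finset

/-!
Put `N = α + r + s`, `c = α + r - 1` and `k = i - j`. The factor `(c + 1)_k / Γ(j + k + c + 1 - N)`
equals `(N - j)! * C(c + k, N - j) / c!`, a polynomial of degree `N - j` in `k`, so the sum over `k`
is the `N`-th forward difference `∑ₖ (-1)^k C(N, k) C(c + k, N - j)`, which vanishes unless `j = 0`.
Only the constant term in `x` survives, and it equals `(-1)^N N! / c!`.
-/

open Function
open scoped Nat

lemma fwdDiff_iter_choose_of_le {m N : ℕ} (h : m ≤ N) (y : ℕ) :
    (fwdDiff 1)^[N] (fun x ↦ x.choose m : ℕ → ℤ) y = if N = m then 1 else 0 := by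
  obtain ⟨k, rfl⟩ := Nat.exists_eq_add_of_le h
  have hm := fwdDiff_iter_choose 0 m
  rw [add_zero] at hm
  rw [add_comm m, iterate_add_apply, hm]
  cases k with
  | zero => simp
  | succ k =>
    simp_rw [iterate_succ_apply, Nat.choose_zero_right, Nat.cast_one, fwdDiff_const,
      fwdDiff_iter_eq_sum_shift, smul_zero, sum_const_zero]
    simp

lemma sum_range_neg_one_pow_mul_choose_mul_choose_add {m N : ℕ} (h : m ≤ N) (c : ℕ) :
    ∑ k ∈ range (N + 1), (-1 : ℤ) ^ k * N.choose k * (c + k).choose m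
      = if N = m then (-1) ^ N else 0 := by
  have hΔ := fwdDiff_iter_eq_sum_shift 1 (fun x ↦ (x.choose m : ℤ)) N c
  simp only [fwdDiff_iter_choose_of_le h, smul_eq_mul, mul_one] at hΔ
  have hsign : ∀ k ∈ range (N + 1), (-1 : ℤ) ^ k = (-1) ^ N * (-1) ^ (N - k) := fun k hk ↦ by
    have := mem_range.1 hk
    rw [← pow_add, show N + (N - k) = k + 2 * (N - k) by omega, pow_add, pow_mul, neg_one_sq,
      one_pow, mul_one]
  calc ∑ k ∈ range (N + 1), (-1 : ℤ) ^ k * N.choose k * (c + k).choose m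
      = (-1) ^ N * ∑ k ∈ range (N + 1), (-1 : ℤ) ^ (N - k) * N.choose k * (c + k).choose m := by
        rw [mul_sum]
        exact sum_congr rfl fun k hk ↦ by rw [hsign k hk]; ring
    _ = if N = m then (-1) ^ N else 0 := by rw [← hΔ, mul_ite, mul_one, mul_zero]

lemma inv_Gamma_natCast_add_one_sub (a m : ℕ) :
    (Real.Gamma ((a : ℝ) + 1 - m))⁻¹ = a.choose m * m ! / a ! := by
  rcases le_or_gt m a with h | h
  · rw [show (a : ℝ) + 1 - m = ((a - m : ℕ) : ℝ) + 1 by push_cast [h]; ring,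
      Real.Gamma_nat_eq_factorial, ← Nat.choose_mul_factorial_mul_factorial h]
    have := (Nat.choose_pos h).ne'
    push_cast
    field_simp
  · rw [show (a : ℝ) + 1 - m = -((m - (a + 1) : ℕ) : ℝ) by push_cast [Nat.cast_sub h]; ring,
      Real.Gamma_neg_nat_eq_zero, Nat.choose_eq_zero_of_lt h]
    simp

lemma poch_natCast_add_one (a k : ℕ) : poch ((a : ℝ) + 1) k = (a + k) ! / a ! := by
  rw [poch, ← Nat.cast_add_one, ← Nat.cast_ascFactorial, ← Nat.factorial_mul_ascFactorial]
  push_cast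
  field_simp

lemma sum_range_sum_range_sub_eq_sum_range_sum_range {M : Type*} [AddCommMonoid M] (N : ℕ)
    (f : ℕ → ℕ → M) (hf : ∀ j k, N < j ∨ N < k → f j k = 0) :
    ∑ i ∈ range (2 * N + 1), ∑ j ∈ range (i + 1), f j (i - j)
      = ∑ j ∈ range (N + 1), ∑ k ∈ range (N + 1), f j k := by
  have hmaps : ∀ p ∈ range (N + 1) ×ˢ range (N + 1), p.1 + p.2 ∈ range (2 * N + 1) := by
    intro p hp; simp only [mem_product, mem_range] at hp ⊢; omega
  rw [← sum_product', ← sum_fiberwise_of_maps_to hmaps]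
  refine sum_congr rfl fun i _ ↦ ?_
  rw [← Nat.sum_antidiagonal_eq_sum_range_succ f i]
  refine (sum_subset (fun p hp ↦ ?_) fun p hp hp' ↦ hf _ _ ?_).symm
  · simp only [mem_filter, HasAntidiagonal.mem_antidiagonal] at hp ⊢; exact hp.2
  · simp only [mem_filter, HasAntidiagonal.mem_antidiagonal, mem_product, mem_range] at hp hp'
    omega

theorem sum_sum_neg_one_pow_div_Gamma_mul_choose_mul_choose_mul_poch (N c : ℕ) (x : ℝ) :
    ∑ i ∈ range (2 * N + 1), ∑ j ∈ range (i + 1),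
        (-1 : ℝ) ^ (i + j) / Real.Gamma ((i : ℝ) + c + 1 - N)
          * (N.choose j : ℝ) * (N.choose (i - j) : ℝ) * poch ((c : ℝ) + 1) (i - j) * x ^ j
      = (-1) ^ N * N ! / c ! := by
  set T : ℕ → ℕ → ℝ := fun j k ↦ (-1) ^ k / Real.Gamma (((j + k : ℕ) : ℝ) + c + 1 - N)
    * N.choose j * N.choose k * poch ((c : ℝ) + 1) k * x ^ j with hT
  have hT_eq (j k : ℕ) (hj : j ≤ N) : T j k
      = N.choose j * x ^ j * (N - j)! / c ! * ((-1) ^ k * N.choose k * (c + k).choose (N - j)) := by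
    simp only [hT]
    rw [show (((j + k : ℕ) : ℝ) + c + 1 - N) = ((c + k : ℕ) : ℝ) + 1 - ((N - j : ℕ) : ℝ) by
      push_cast [Nat.cast_sub hj]; ring, div_eq_mul_inv, inv_Gamma_natCast_add_one_sub,
      poch_natCast_add_one]
    field_simp
  calc _ = ∑ i ∈ range (2 * N + 1), ∑ j ∈ range (i + 1), T j (i - j) := by
        refine sum_congr rfl fun i _ ↦ sum_congr rfl fun j hj ↦ ?_
        have hji : j ≤ i := Nat.lt_succ_iff.1 (mem_range.1 hj)
        simp only [hT]
        rw [Nat.add_sub_cancel' hji, show i + j = (i - j) + 2 * j by omega, pow_add, pow_mul,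
          neg_one_sq, one_pow, mul_one]
    _ = ∑ j ∈ range (N + 1), ∑ k ∈ range (N + 1), T j k :=
        sum_range_sum_range_sub_eq_sum_range_sum_range N T fun j k h ↦ by
          rcases h with h | h <;> simp [hT, Nat.choose_eq_zero_of_lt h]
    _ = ∑ j ∈ range (N + 1),
          N.choose j * x ^ j * (N - j)! / c ! * (if N = N - j then (-1) ^ N else 0) := by
        refine sum_congr rfl fun j hj ↦ ?_
        have hjN : j ≤ N := Nat.lt_succ_iff.1 (mem_range.1 hj)
        have hsum := congrArg (Int.cast : ℤ → ℝ)
          (sum_range_neg_one_pow_mul_choose_mul_choose_add (Nat.sub_le N j) c)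
        push_cast at hsum
        rw [← hsum, mul_sum]
        exact sum_congr rfl fun k _ ↦ hT_eq j k hjN
    _ = (-1) ^ N * N ! / c ! := by
        rw [sum_eq_single_of_mem 0 (by simp) fun j hj hj0 ↦ by
          rw [if_neg (by have := mem_range.1 hj; omega), mul_zero]]
        simp only [Nat.choose_zero_right, Nat.cast_one, pow_zero, mul_one, tsub_zero, one_mul,
          ↓reduceIte]
        ring

theorem K_special_value (α : ℕ) (r s : ℤ) (hr : 1 ≤ r) (hrs : 0 ≤ r + s) (x : ℝ) :
    ∑ i ∈ range (2 * (α + (r + s).toNat) + 1), ∑ j ∈ range (i + 1),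
        (-1 : ℝ) ^ (i + j) / Real.Gamma ((i : ℝ) - s)
          * ((α + (r + s).toNat).choose j : ℝ) * ((α + (r + s).toNat).choose (i - j) : ℝ)
          * poch ((α : ℝ) + r) (i - j) * x ^ j
      = (-1 : ℝ) ^ (α + (r + s).toNat) * poch ((α : ℝ) + 1) (r + s).toNat
          / poch ((α : ℝ) + 1) (r - 1).toNat := by
  obtain ⟨σ, rfl⟩ : ∃ σ : ℕ, r = σ + 1 := ⟨(r - 1).toNat, by omega⟩
  obtain ⟨n, hn⟩ : ∃ n : ℕ, (σ + 1 : ℤ) + s = n := ⟨_, (Int.toNat_of_nonneg hrs).symm⟩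
  have hs : (s : ℝ) = n - σ - 1 := by
    rw [← Int.cast_natCast n, ← hn]; push_cast; ring
  rw [hn, Int.toNat_natCast, show ((σ : ℤ) + 1 - 1).toNat = σ by omega, poch_natCast_add_one,
    poch_natCast_add_one, mul_div_assoc, div_div_div_cancel_right₀ (by positivity), ← mul_div_assoc]
  have hΓ (i : ℕ) : (i : ℝ) - s = i + ((α + σ : ℕ) : ℝ) + 1 - ((α + n : ℕ) : ℝ) := by
    rw [hs]; push_cast; ring
  have hpoch : (α : ℝ) + ((σ + 1 : ℤ) : ℝ) = ((α + σ : ℕ) : ℝ) + 1 := by push_cast; ring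
  simp only [hΓ, hpoch]
  exact sum_sum_neg_one_pow_div_Gamma_mul_choose_mul_choose_mul_poch (α + n) (α + σ) x
end

section
/- Let \(\alpha > -1\) and define \(a_i(x) = \frac{1}{i!}\sum_{j=1}^i(-1)^{i+j+1}\binom{\alpha+1}{j-1}\binom{\alpha+2}{i-j}(\alpha+3)_{i-j}\,x^j\) for \(i\ge 1\). If \(\alpha\) is a nonnegative integer, then \(a_i(x) = 0\) for all \(i > 2\alpha+4\), \(a_{2\alpha+4}(x) = (-1)^{\alpha+1}\frac{x^{\alpha+2}}{(\alpha+2)!}\), and \(\sum_{i=1}^{2\alpha+4} a_i(x) = 0\) identically in x. -/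
open Finset

/-- The coefficients `a_i(x)` of the differential equation, for parameter `α`. -/
noncomputable def aCoef (α : ℝ) (i : ℕ) (x : ℝ) : ℝ :=
  1 / i.factorial *
    ∑ j ∈ Icc 1 i,
      (-1 : ℝ) ^ (i + j + 1) * gbinom (α + 1) (j - 1) * gbinom (α + 2) (i - j)
        * poch (α + 3) (i - j) * x ^ j

/-! For `α = N ∈ ℕ` the generalized binomials are ordinary ones, so the `j`-th summand of
`a_{j+k}` vanishes unless `j, k ≤ N + 2`; this gives the first two claims. For the third, after
swapping the sums the coefficient of `x ^ j`, `1 ≤ j ≤ n := N + 2`, is a multiple of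
`∑ₖ (-1)^k C(n,k) (n+1)_k / (j+k)!`. Since `(n+1)_k / (j+k)! = (j+k+1)_{n-j} / n!` is a polynomial
of degree `n - j < n` in `k`, this sum is an `n`-th forward difference of it and vanishes. -/

theorem Polynomial.alternating_sum_range_choose_mul_eval_of_natDegree_lt {R : Type*} [CommRing R]
    {P : Polynomial R} {n : ℕ} (hP : P.natDegree < n) :
    ∑ k ∈ range (n + 1), (-1 : R) ^ k * n.choose k * P.eval (k : R) = 0 := by
  have h := congr_fun (P.fwdDiff_iter_eq_zero_of_degree_lt hP) 0
  rw [fwdDiff_iter_eq_sum_shift] at h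
  calc ∑ k ∈ range (n + 1), (-1 : R) ^ k * n.choose k * P.eval (k : R)
      = (-1) ^ n *
          ∑ k ∈ range (n + 1), ((-1 : ℤ) ^ (n - k) * n.choose k) • P.eval (0 + k • 1) := by
        rw [mul_sum]
        refine sum_congr rfl fun k hk => ?_
        have hkn : n + (n - k) = k + 2 * (n - k) := by have := mem_range.1 hk; omega
        simp only [zsmul_eq_mul, nsmul_one, zero_add]
        push_cast
        rw [← mul_assoc, ← mul_assoc, ← pow_add, hkn, pow_add, pow_mul]
        simp
    _ = 0 := by rw [h, Pi.zero_apply, mul_zero]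

theorem Finset.sum_Icc_sum_Icc_sub_eq_sum_Icc_sum_range {M : Type*} [AddCommMonoid M] {n : ℕ}
    {f : ℕ → ℕ → M} (hf : ∀ j k, n < j ∨ n < k → f j k = 0) :
    ∑ i ∈ Icc 1 (2 * n), ∑ j ∈ Icc 1 i, f j (i - j) =
      ∑ j ∈ Icc 1 n, ∑ k ∈ range (n + 1), f j k := by
  rw [sum_comm' (t' := Icc 1 (2 * n)) (s' := fun j => Icc j (2 * n))
    (by intro i j; simp only [mem_Icc]; omega)]
  rw [← sum_subset (Icc_subset_Icc_right (by omega : n ≤ 2 * n))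
    fun j hj hjn => sum_eq_zero fun i _ => hf _ _ <| .inl <| by
      simp only [mem_Icc] at hj hjn; omega]
  refine sum_congr rfl fun j hj => ?_
  have hjn := (mem_Icc.1 hj).2
  rw [← Ico_add_one_right_eq_Icc, sum_Ico_eq_sum_range,
    ← sum_subset (range_subset_range.2 (by omega : n + 1 ≤ 2 * n + 1 - j))
      (fun k _ hk => hf _ _ (Or.inr (by simpa using hk)))]
  exact sum_congr rfl fun k _ => by rw [Nat.add_sub_cancel_left]

lemma gbinom_natCast (N m : ℕ) : gbinom N m = N.choose m := by
  rw [gbinom, poch, ← descPochhammer_eval_eq_ascPochhammer, descPochhammer_eval_eq_descFactorial,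
    Nat.descFactorial_eq_factorial_mul_choose]
  push_cast
  field_simp

lemma poch_natCast (N k : ℕ) : poch N k = N.ascFactorial k :=
  ascPochhammer_nat_eq_natCast_ascFactorial ℝ N k

/-- The summand of `aCoef N (j + k) x` with index `j`, for natural `α = N`. -/
noncomputable def aCoefTerm (N j k : ℕ) (x : ℝ) : ℝ :=
  (-1) ^ (k + 1) * (N + 1).choose (j - 1) * (N + 2).choose k * (N + 3).ascFactorial k
    / (j + k).factorial * x ^ j

lemma aCoef_natCast (N i : ℕ) (x : ℝ) :
    aCoef N i x = ∑ j ∈ Icc 1 i, aCoefTerm N j (i - j) x := by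
  rw [aCoef, mul_sum]
  refine sum_congr rfl fun j hj => ?_
  have hji : j + (i - j) = i := by have := (mem_Icc.1 hj).2; omega
  have hsign : i + j + 1 = (i - j + 1) + 2 * j := by omega
  rw [aCoefTerm, hji, hsign, pow_add, pow_mul, neg_one_sq, one_pow, mul_one,
    show (N : ℝ) + 1 = ((N + 1 : ℕ) : ℝ) by push_cast; rfl,
    show (N : ℝ) + 2 = ((N + 2 : ℕ) : ℝ) by push_cast; rfl,
    show (N : ℝ) + 3 = ((N + 3 : ℕ) : ℝ) by push_cast; rfl,
    gbinom_natCast, gbinom_natCast, poch_natCast]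
  ring

lemma aCoefTerm_eq_zero {N j k : ℕ} (h : N + 2 < j ∨ N + 2 < k) (x : ℝ) :
    aCoefTerm N j k x = 0 := by
  rcases h with h | h
  · simp [aCoefTerm, Nat.choose_eq_zero_of_lt (by omega : N + 1 < j - 1)]
  · simp [aCoefTerm, Nat.choose_eq_zero_of_lt h]

lemma aCoefTerm_add_two_add_two (N : ℕ) (x : ℝ) :
    aCoefTerm N (N + 2) (N + 2) x = (-1) ^ (N + 1) * x ^ (N + 2) / (N + 2).factorial := by
  have hfac : ((N + 2).factorial : ℝ) * (N + 3).ascFactorial (N + 2)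
      = (N + 2 + (N + 2)).factorial := by
    exact_mod_cast Nat.factorial_mul_ascFactorial (N + 2) (N + 2)
  rw [aCoefTerm, show N + 2 - 1 = N + 1 from rfl, Nat.choose_self, Nat.choose_self, ← hfac]
  field_simp
  ring

lemma sum_aCoefTerm_eq_zero {N j : ℕ} (hj : j ∈ Icc 1 (N + 2)) (x : ℝ) :
    ∑ k ∈ range (N + 3), aCoefTerm N j k x = 0 := by
  obtain ⟨hj1, hjn⟩ := mem_Icc.1 hj
  set P : Polynomial ℝ := (ascPochhammer ℝ (N + 2 - j)).comp (.X + .C ((j : ℝ) + 1))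
  have hP : P.natDegree < N + 2 := by
    rw [Polynomial.natDegree_comp, ascPochhammer_natDegree, Polynomial.natDegree_X_add_C]
    omega
  have hterm : ∀ k, aCoefTerm N j k x = -((N + 1).choose (j - 1) * x ^ j / (N + 2).factorial)
      * ((-1) ^ k * (N + 2).choose k * P.eval (k : ℝ)) := by
    intro k
    have hP_eval : P.eval (k : ℝ) = (j + k + 1).ascFactorial (N + 2 - j) := by
      simp only [P, Polynomial.eval_comp, Polynomial.eval_add, Polynomial.eval_X, Polynomial.eval_C]
      rw [← ascPochhammer_nat_eq_natCast_ascFactorial]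
      push_cast; ring_nf
    have h1 : ((N + 2).factorial : ℝ) * (N + 3).ascFactorial k = (N + 2 + k).factorial := by
      exact_mod_cast Nat.factorial_mul_ascFactorial (N + 2) k
    have h2 : ((j + k).factorial : ℝ) * (j + k + 1).ascFactorial (N + 2 - j)
        = (N + 2 + k).factorial := by
      rw [show N + 2 + k = j + k + (N + 2 - j) by omega]
      exact_mod_cast Nat.factorial_mul_ascFactorial (j + k) (N + 2 - j)
    rw [aCoefTerm, hP_eval]
    field_simp
    linear_combination -(x ^ j * (-1) ^ k * (N + 1).choose (j - 1) * (N + 2).choose k) * (h1 - h2)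
  simp_rw [hterm, ← mul_sum,
    Polynomial.alternating_sum_range_choose_mul_eval_of_natDegree_lt hP, mul_zero]

theorem aCoef_nonneg_integer_alpha (α : ℕ) (x : ℝ) :
    (∀ i, 2 * α + 4 < i → aCoef α i x = 0) ∧
    aCoef α (2 * α + 4) x = (-1 : ℝ) ^ (α + 1) * x ^ (α + 2) / (α + 2).factorial ∧
    ∑ i ∈ Icc 1 (2 * α + 4), aCoef α i x = 0 := by
  have hvanish : ∀ j k, α + 2 < j ∨ α + 2 < k → aCoefTerm α j k x = 0 :=
    fun j k h => aCoefTerm_eq_zero h x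
  refine ⟨fun i hi => ?_, ?_, ?_⟩
  · rw [aCoef_natCast]
    exact sum_eq_zero fun j hj => hvanish _ _ (by simp at hj; omega)
  · rw [aCoef_natCast, sum_eq_single_of_mem (α + 2) (by simp; omega)
      fun j hj hne => hvanish _ _ (by simp at hj; omega)]
    rw [show 2 * α + 4 - (α + 2) = α + 2 by omega, aCoefTerm_add_two_add_two]
  · simp_rw [aCoef_natCast, show 2 * α + 4 = 2 * (α + 2) by ring]
    rw [sum_Icc_sum_Icc_sub_eq_sum_Icc_sum_range hvanish]
    exact sum_eq_zero fun j hj => sum_aCoefTerm_eq_zero hj x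
end
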